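/- arXiv:2111.08265 — 9 statements merged into one kernel-verified Lean document; each statement's English description precedes it below -/
import Mathlib

section
/- For every a ∈ [0,1), m ≥ 1 a natural number, and θ ∈ (0, π), the inequality |sin(mθ) - a·sin((m-1)θ)| / (sin(θ)·√(1 + a² - 2a·cos θ)) ≤ (m - a(m-1))/(1 - a) holds. -/
/-!
Write `D = √(1 + a² - 2a cos θ) = |e^{iθ} - a|` and `uₙ = sin((n+1)θ) - a sin(nθ)`, the imaginary
part of `e^{inθ}(e^{iθ} - a)`. The real part of that number is bounded by `D`, and the addition
formulas give `uₙ₊₁ = cos θ · uₙ + sin θ · (real part)`, so `|uₙ| ≤ sin θ · (1 + n D)`. Since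
`1 - a ≤ D`, this is at most `sin θ · D · (n + 1 - a n) / (1 - a)`.
-/

open Real

lemma abs_one_sub_le_sqrt_one_add_sq_sub_two_mul_cos {a : ℝ} (ha : 0 ≤ a) (θ : ℝ) :
    |1 - a| ≤ √(1 + a ^ 2 - 2 * a * cos θ) := by
  rw [← sqrt_sq_eq_abs]
  exact sqrt_le_sqrt (by nlinarith [cos_le_one θ])

lemma sin_add_sub_mul_sin_sq_add_cos_add_sub_mul_cos_sq (a x θ : ℝ) :
    (sin (x + θ) - a * sin x) ^ 2 + (cos (x + θ) - a * cos x) ^ 2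
      = 1 + a ^ 2 - 2 * a * cos θ := by
  simp only [sin_add, cos_add]
  linear_combination (1 + a ^ 2 - 2 * a * cos θ) * sin_sq_add_cos_sq x +
    (sin x ^ 2 + cos x ^ 2) * sin_sq_add_cos_sq θ

lemma abs_cos_add_sub_mul_cos_le (a x θ : ℝ) :
    |cos (x + θ) - a * cos x| ≤ √(1 + a ^ 2 - 2 * a * cos θ) := by
  rw [← sqrt_sq_eq_abs, ← sin_add_sub_mul_sin_sq_add_cos_add_sub_mul_cos_sq a x θ]
  exact sqrt_le_sqrt (le_add_of_nonneg_left (sq_nonneg _))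

lemma sin_add_two_mul_sub_mul_sin_add (a x θ : ℝ) :
    sin (x + θ + θ) - a * sin (x + θ)
      = cos θ * (sin (x + θ) - a * sin x) + sin θ * (cos (x + θ) - a * cos x) := by
  simp only [sin_add, cos_add]
  ring

lemma abs_sin_add_two_mul_sub_mul_sin_add_le (a x θ : ℝ) :
    |sin (x + θ + θ) - a * sin (x + θ)|
      ≤ |sin (x + θ) - a * sin x| + |sin θ| * √(1 + a ^ 2 - 2 * a * cos θ) := by
  rw [sin_add_two_mul_sub_mul_sin_add]
  calc _ ≤ |cos θ| * |sin (x + θ) - a * sin x| + |sin θ| * |cos (x + θ) - a * cos x| := by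
        rw [← abs_mul, ← abs_mul]
        exact abs_add_le _ _
    _ ≤ _ := by
      gcongr
      · exact mul_le_of_le_one_left (abs_nonneg _) (abs_cos_le_one θ)
      · exact abs_cos_add_sub_mul_cos_le a x θ

lemma abs_sin_succ_mul_sub_mul_sin_mul_le (a θ : ℝ) (n : ℕ) :
    |sin ((n + 1) * θ) - a * sin (n * θ)|
      ≤ |sin θ| * (1 + n * √(1 + a ^ 2 - 2 * a * cos θ)) := by
  induction n with
  | zero => simp
  | succ n ih =>
    have step := abs_sin_add_two_mul_sub_mul_sin_add_le a (n * θ) θ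
    rw [← add_one_mul, ← add_one_mul] at step
    push_cast
    linarith

theorem g_m_le (a : ℝ) (ha0 : 0 ≤ a) (ha1 : a < 1) (m : ℕ) (hm : 1 ≤ m)
    (θ : ℝ) (hθ : θ ∈ Set.Ioo 0 Real.pi) :
    |Real.sin (m * θ) - a * Real.sin (((m : ℝ) - 1) * θ)| /
      (Real.sin θ * Real.sqrt (1 + a ^ 2 - 2 * a * Real.cos θ))
      ≤ ((m : ℝ) - a * ((m : ℝ) - 1)) / (1 - a) := by
  obtain ⟨n, rfl⟩ := Nat.exists_eq_add_of_le' hm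
  set D := √(1 + a ^ 2 - 2 * a * cos θ)
  have hs : 0 < sin θ := sin_pos_of_pos_of_lt_pi hθ.1 hθ.2
  have hD : 1 - a ≤ D := by
    simpa [abs_of_pos (sub_pos.2 ha1)] using abs_one_sub_le_sqrt_one_add_sq_sub_two_mul_cos ha0 θ
  have hu := abs_sin_succ_mul_sub_mul_sin_mul_le a θ n
  rw [abs_of_pos hs] at hu
  push_cast
  rw [add_sub_cancel_right, div_le_div_iff₀ (mul_pos hs (by linarith)) (by linarith)]
  calc _ ≤ sin θ * (1 + n * D) * (1 - a) := by gcongr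
    _ ≤ _ := by nlinarith [mul_le_mul_of_nonneg_left hD hs.le]
end

section
/- For any complex numbers κ and k with k ∉ ℝ, there exists n ∈ ℕ, n ≥ 1, such that |1 + κ·k^(2n)| ≥ 1. -/
/-!
Put `a = k ^ 2`. If `‖1 + κ aⁿ‖ < 1` for every `n ≥ 1`, then `Re (κ aⁿ) < 0` for every `n ≥ 1`.
The identity `Re (b c²) + |c|² Re b = 2 Re c · Re (b c)` with `b = κ aⁿ`, `c = aⁿ` then forces
`Re (aⁿ) > 0` for all `n ≥ 1`. This is impossible unless `arg a = 0`: otherwise the first `n` with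
`n |arg a| ≥ π / 2` has `n |arg a| < π / 2 + π`, so `cos (n arg a) ≤ 0`. But `k ∉ ℝ` means that
`k²` is not a nonnegative real.
-/

open Real

theorem exists_cos_nat_mul_nonpos {θ : ℝ} (hθ : 0 < θ) (hθπ : θ ≤ π) :
    ∃ n : ℕ, 1 ≤ n ∧ cos (n * θ) ≤ 0 := by
  set n := ⌈π / (2 * θ)⌉₊
  have hquot : 0 < π / (2 * θ) := by positivity
  refine ⟨n, Nat.one_le_iff_ne_zero.mpr fun h ↦ ?_, ?_⟩
  · linarith [Nat.ceil_eq_zero.mp h]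
  have hge : π / 2 ≤ n * θ := by
    have := (div_le_iff₀ (by positivity : (0 : ℝ) < 2 * θ)).mp (Nat.le_ceil (π / (2 * θ)))
    linarith
  have hlt : n * θ < π / 2 + θ := by
    calc n * θ < (π / (2 * θ) + 1) * θ := by gcongr; exact Nat.ceil_lt_add_one hquot.le
      _ = π / 2 + θ := by field_simp
  exact cos_nonpos_of_pi_div_two_le_of_le hge (by linarith)

namespace Complex

theorem re_pow_eq_norm_pow_mul_cos (a : ℂ) (n : ℕ) :
    (a ^ n).re = ‖a‖ ^ n * Real.cos (n * a.arg) := by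
  conv_lhs => rw [← norm_mul_exp_arg_mul_I a, mul_pow, ← exp_nat_mul]
  rw [show (n : ℂ) * (a.arg * I) = ((n * a.arg : ℝ) : ℂ) * I by push_cast; ring,
    ← ofReal_pow, re_ofReal_mul, exp_ofReal_mul_I_re]

theorem exists_pow_re_nonpos_of_arg_ne_zero {a : ℂ} (ha : a.arg ≠ 0) :
    ∃ n : ℕ, 1 ≤ n ∧ (a ^ n).re ≤ 0 := by
  obtain ⟨n, hn, hcos⟩ := exists_cos_nat_mul_nonpos (abs_pos.mpr ha)
    (abs_le.mpr ⟨by linarith [neg_pi_lt_arg a], arg_le_pi a⟩)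
  refine ⟨n, hn, ?_⟩
  rw [re_pow_eq_norm_pow_mul_cos, ← Real.cos_abs, abs_mul, Nat.abs_cast]
  exact mul_nonpos_of_nonneg_of_nonpos (by positivity) hcos

theorem re_pos_of_re_mul_pow_neg {b c : ℂ} (h₀ : b.re < 0) (h₁ : (b * c).re < 0)
    (h₂ : (b * c ^ 2).re < 0) : 0 < c.re := by
  -- the left side is negative, while `Re c ≤ 0` would make the right side nonnegative
  have key : (b * c ^ 2).re + normSq c * b.re = 2 * c.re * (b * c).re := by
    simp only [mul_re, mul_im, normSq_apply, pow_two]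
    ring
  by_contra! hc
  nlinarith [normSq_nonneg c]

theorem arg_eq_zero_of_forall_re_mul_pow_neg {b a : ℂ} (h : ∀ n, 1 ≤ n → (b * a ^ n).re < 0) :
    a.arg = 0 := by
  by_contra ha
  obtain ⟨n, hn, hre⟩ := exists_pow_re_nonpos_of_arg_ne_zero ha
  refine hre.not_gt (re_pos_of_re_mul_pow_neg (h n hn) ?_ ?_)
  · convert h (2 * n) (by omega) using 2; ring
  · convert h (3 * n) (by omega) using 2; ring

theorem re_neg_of_norm_one_add_lt_one {z : ℂ} (h : ‖1 + z‖ < 1) : z.re < 0 := by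
  have := (1 + z).re_le_norm
  simp only [add_re, one_re] at this
  linarith

theorem arg_sq_ne_zero {k : ℂ} (hk : k.im ≠ 0) : (k ^ 2).arg ≠ 0 := by
  rw [Ne, arg_eq_zero_iff]
  rintro ⟨hre, him⟩
  simp only [pow_two, mul_re, mul_im] at hre him
  have : k.re = 0 := by
    rcases mul_eq_zero.mp (show k.re * k.im = 0 by linarith) with h | h
    · exact h
    · exact absurd h hk
  nlinarith [mul_self_pos.mpr hk]

end Complex

theorem exists_abs_one_add_kappa_pow_ge (κ k : ℂ) (hk : k.im ≠ 0) :
    ∃ n : ℕ, 1 ≤ n ∧ 1 ≤ ‖1 + κ * k ^ (2 * n)‖ := by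
  by_contra! h
  refine Complex.arg_sq_ne_zero hk (Complex.arg_eq_zero_of_forall_re_mul_pow_neg (b := κ) ?_)
  intro n hn
  rw [← pow_mul]
  exact Complex.re_neg_of_norm_one_add_lt_one (h n hn)
end

section
/- For any φ ∈ ℝ and θ ∈ ℝ with θ not an integer multiple of π, there exists n ∈ ℕ, n ≥ 1, such that Re(e^{i(φ + 2nθ)}) ≥ 0. -/
open Real

lemma aux_cos_step (x α : ℝ) (hα0 : 0 < α) (hαπ : α ≤ π) :
    ∃ n : ℕ, 1 ≤ n ∧ 0 ≤ Real.cos (x + n * α) := by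
  have hπ : (0:ℝ) < π := Real.pi_pos
  obtain ⟨k, hk⟩ := exists_int_gt ((x + α + π/2) / (2*π))
  have h2π : (0:ℝ) < 2*π := by linarith
  have hxk : x + α + π/2 < 2*π*k := by
    have := (div_lt_iff₀ h2π).mp hk
    linarith [this]
  -- predicate
  have hex : ∃ n : ℕ, 2*π*k - π/2 ≤ x + n*α := by
    obtain ⟨n, hn⟩ := exists_nat_ge ((2*π*k - π/2 - x)/α)
    refine ⟨n, ?_⟩
    have := (div_le_iff₀ hα0).mp hn
    linarith
  classical
  set n := Nat.find hex with hndef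
  have hspec : 2*π*k - π/2 ≤ x + n*α := Nat.find_spec hex
  have hn0 : n ≠ 0 := by
    intro h
    have := hspec
    rw [h] at this
    push_cast at this
    linarith
  have hn1 : 1 ≤ n := Nat.one_le_iff_ne_zero.mpr hn0
  have hmin : ¬ (2*π*k - π/2 ≤ x + (n-1 : ℕ)*α) := Nat.find_min hex (by omega)
  have hcast : ((n-1 : ℕ) : ℝ) = (n : ℝ) - 1 := by
    have : (n : ℝ) ≥ 1 := by exact_mod_cast hn1
    push_cast [Nat.cast_sub hn1]
    ring
  rw [hcast] at hmin
  push_neg at hmin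
  refine ⟨n, hn1, ?_⟩
  have heq : x + n*α = (x + n*α - k*(2*π)) + k*(2*π) := by ring
  rw [heq, Real.cos_add_int_mul_two_pi]
  apply Real.cos_nonneg_of_mem_Icc
  constructor
  · nlinarith [hspec]
  · nlinarith [hmin]

theorem exists_re_exp_nonneg (φ θ : ℝ) (hθ : ∀ m : ℤ, θ ≠ m * Real.pi) :
    ∃ n : ℕ, 1 ≤ n ∧ 0 ≤ (Complex.exp (Complex.I * (φ + 2 * n * θ))).re := by
  have hπ : (0:ℝ) < π := Real.pi_pos
  -- reduce to real cosine
  have hre : ∀ n : ℕ, (Complex.exp (Complex.I * (φ + 2 * n * θ))).re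
      = Real.cos (φ + 2 * n * θ) := by
    intro n
    have : (Complex.I * (↑φ + 2 * ↑n * ↑θ)) = (↑(φ + 2 * n * θ) : ℂ) * Complex.I := by
      push_cast; ring
    rw [this, Complex.exp_ofReal_mul_I_re]
  -- reduce 2θ mod 2π
  set m : ℤ := ⌊θ / π⌋ with hm
  set α : ℝ := 2*θ - m*(2*π) with hα
  have hmθ : (m:ℝ)*π ≤ θ := by
    have := Int.floor_le (θ / π)
    calc (m:ℝ)*π = (θ/π : ℝ) * π - ((θ/π : ℝ) - m)*π := by ring
    _ ≤ θ := by
        have h1 : ((θ/π : ℝ) - m) ≥ 0 := by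
          have := Int.floor_le (θ / π); linarith
        nlinarith [div_mul_cancel₀ θ (ne_of_gt hπ)]
  have hθm : θ < ((m:ℝ)+1)*π := by
    have h1 := Int.lt_floor_add_one (θ / π)
    nlinarith [div_mul_cancel₀ θ (ne_of_gt hπ)]
  have hne : θ ≠ (m:ℝ)*π := hθ m
  have hα0 : 0 < α := by
    rcases lt_or_eq_of_le hmθ with h | h
    · rw [hα]; linarith
    · exact absurd h.symm hne
  have hα2π : α < 2*π := by simp [hα]; nlinarith
  have hcos : ∀ n : ℕ, Real.cos (φ + 2 * n * θ) = Real.cos (φ + n * α) := by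
    intro n
    have h2 := Real.cos_add_int_mul_two_pi (φ + n * α) ((n:ℤ) * m)
    have : φ + 2 * n * θ = (φ + n * α) + ((n:ℤ) * m : ℤ) * (2*π) := by
      rw [hα]; push_cast; ring
    rw [this, h2]
  rcases le_or_gt α π with hcase | hcase
  · obtain ⟨n, hn1, hn⟩ := aux_cos_step φ α hα0 hcase
    exact ⟨n, hn1, by rw [hre, hcos]; exact hn⟩
  · set β : ℝ := 2*π - α with hβ
    have hβ0 : 0 < β := by simp [hβ]; linarith
    have hβπ : β ≤ π := by simp [hβ]; linarith
    obtain ⟨n, hn1, hn⟩ := aux_cos_step (-φ) β hβ0 hβπ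
    refine ⟨n, hn1, ?_⟩
    rw [hre, hcos]
    have : Real.cos (φ + n * α) = Real.cos (-φ + n * β) := by
      have h2 := Real.cos_add_int_mul_two_pi (-(φ + n * α)) (n:ℤ)
      have h1 : -φ + n * β = -(φ + n * α) + ((n:ℤ) : ℝ) * (2*π) := by
        rw [hβ]; push_cast; ring
      rw [h1, h2, Real.cos_neg]
    rw [this]; exact hn
end

section
/- Let g : ℕ → ℝ be a positive sequence (indexed by n ≥ 1, with the convention g₀-related terms absent) and define w_n := ((-Δ₀ g)_n)/g_n where (-Δ₀ g)_n = 2g_n - g_{n-1} - g_{n+1} for n ≥ 2 and (-Δ₀ g)_1 = 2g_1 - g_2. Then for any finitely supported complex sequence u : ℕ → ℂ with u_0 = 0, the identity ∑_{n≥1} |u_n - u_{n-1}|² = ∑_{n≥1} w_n |u_n|² + ∑_{n≥2} |√(g_{n-1}/g_n)·u_n - √(g_n/g_{n-1})·u_{n-1}|² holds. -/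
/-!
Since `√(g_{n-1}/g_n) · √(g_n/g_{n-1}) = 1`, expanding the square gives, for `n ≥ 2`,
`|u_n - u_{n-1}|² = |√(g_{n-1}/g_n) u_n - √(g_n/g_{n-1}) u_{n-1}|²
  + (1 - g_{n-1}/g_n) |u_n|² + (1 - g_n/g_{n-1}) |u_{n-1}|²`.
Summing over `n`, the coefficients of `|u_n|²` recombine into
`w_n = (1 - g_{n-1}/g_n) + (1 - g_{n+1}/g_n)` up to a telescoping remainder, whose one surviving
term is cancelled by the `n = 1` term `|u_1|²` (as `u_0 = 0`).
-/

lemma norm_sub_sq_eq_norm_smul_sub_smul_sq {E : Type*} [NormedAddCommGroup E]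
    [InnerProductSpace ℝ E] {s t : ℝ} (hst : s * t = 1) (x y : E) :
    ‖y - x‖ ^ 2 = ‖s • y - t • x‖ ^ 2 + (1 - s ^ 2) * ‖y‖ ^ 2 + (1 - t ^ 2) * ‖x‖ ^ 2 := by
  rw [norm_sub_sq_real, norm_sub_sq_real, inner_smul_left, inner_smul_right, norm_smul,
    norm_smul, mul_pow, mul_pow, Real.norm_eq_abs, Real.norm_eq_abs, sq_abs, sq_abs]
  simp only [conj_trivial]
  linear_combination (2 * inner ℝ y x) * hst

lemma Complex.norm_sub_sq_eq_norm_sqrt_div_mul_sub_sq {a b : ℝ} (ha : 0 < a) (hb : 0 < b)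
    (x y : ℂ) :
    ‖y - x‖ ^ 2 = ‖(√(a / b) : ℂ) * y - (√(b / a) : ℂ) * x‖ ^ 2
      + (1 - a / b) * ‖y‖ ^ 2 + (1 - b / a) * ‖x‖ ^ 2 := by
  have hst : √(a / b) * √(b / a) = 1 := by
    rw [← Real.sqrt_mul (by positivity), div_mul_div_comm, mul_comm a b,
      div_self (by positivity), Real.sqrt_one]
  simpa only [← Complex.real_smul, Real.sq_sqrt (div_pos ha hb).le,
    Real.sq_sqrt (div_pos hb ha).le] using norm_sub_sq_eq_norm_smul_sub_smul_sq hst x y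

lemma summable_of_forall_le_eq_zero {α : Type*} [AddCommMonoid α] [TopologicalSpace α]
    {f : ℕ → α} (N : ℕ) (hf : ∀ n, N ≤ n → f n = 0) : Summable f :=
  summable_of_ne_finset_zero (s := Finset.range N) fun n hn => hf n (by simpa using hn)

section Telescoping

variable {G : Type*} [AddCommGroup G] [TopologicalSpace G] [IsTopologicalAddGroup G] [T2Space G]

lemma tsum_sub_nat_succ {f : ℕ → G} (hf : Summable f) : ∑' n, (f n - f (n + 1)) = f 0 := by
  rw [hf.tsum_sub ((summable_nat_add_iff 1).mpr hf), hf.tsum_eq_zero_add, add_sub_cancel_right]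

lemma tsum_eq_tsum_add_tsum_of_telescoping {a b c φ : ℕ → G} (hb : Summable b)
    (hc : Summable c) (hφ : Summable φ) (h0 : a 0 + φ 0 = b 0)
    (hsucc : ∀ n, a (n + 1) = c n + b (n + 1) + (φ n - φ (n + 1))) :
    ∑' n, a n = ∑' n, b n + ∑' n, c n := by
  have hb' : Summable fun n => b (n + 1) := (summable_nat_add_iff 1).mpr hb
  have hφ' : Summable fun n => φ n - φ (n + 1) := hφ.sub ((summable_nat_add_iff 1).mpr hφ)
  have ha : Summable a := (summable_nat_add_iff 1).mp <| by
    simpa only [hsucc] using (hc.add hb').add hφ'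
  rw [ha.tsum_eq_zero_add, hb.tsum_eq_zero_add, ← h0]
  simp_rw [hsucc]
  rw [(hc.add hb').tsum_add hφ', hc.tsum_add hb', tsum_sub_nat_succ hφ]
  abel

end Telescoping

theorem generalized_discrete_hardy_identity
    (g : ℕ → ℝ) (hg : ∀ n, 1 ≤ n → 0 < g n)
    (w : ℕ → ℝ) (hw1 : w 1 = (2 * g 1 - g 2) / g 1)
    (hw : ∀ n, 2 ≤ n → w n = (2 * g n - g (n - 1) - g (n + 1)) / g n)
    (u : ℕ → ℂ) (hu : ∃ N, ∀ n, N ≤ n → u n = 0) (hu0 : u 0 = 0) :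
    ∑' n : ℕ, ‖u (n + 1) - u n‖ ^ 2
      = (∑' n : ℕ, w (n + 1) * ‖u (n + 1)‖ ^ 2)
        + ∑' n : ℕ, ‖(Real.sqrt (g (n + 1) / g (n + 2)) : ℂ) * u (n + 2)
            - (Real.sqrt (g (n + 2) / g (n + 1)) : ℂ) * u (n + 1)‖ ^ 2 := by
  obtain ⟨N, hN⟩ := hu
  have hN_add (n : ℕ) (hn : N ≤ n) (k : ℕ) : u (n + k) = 0 := hN _ (hn.trans le_self_add)
  set φ : ℕ → ℝ := fun n => (1 - g (n + 2) / g (n + 1)) * ‖u (n + 1)‖ ^ 2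
  refine tsum_eq_tsum_add_tsum_of_telescoping (φ := φ)
    (summable_of_forall_le_eq_zero N fun n hn => by simp [hN_add n hn])
    (summable_of_forall_le_eq_zero N fun n hn => by simp [hN_add n hn])
    (summable_of_forall_le_eq_zero N fun n hn => by simp [φ, hN_add n hn]) ?_ fun n => ?_
  · have h1 := hg 1 le_rfl
    simp only [φ, hu0, sub_zero, hw1]
    field_simp
    ring
  · have h1 := hg (n + 1) (by omega)
    have h2 := hg (n + 2) (by omega)
    have hwn : w (n + 2) = (2 * g (n + 2) - g (n + 1) - g (n + 3)) / g (n + 2) :=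
      hw (n + 2) le_add_self
    rw [Complex.norm_sub_sq_eq_norm_sqrt_div_mul_sub_sq h1 h2, hwn]
    simp only [φ]
    field_simp
    ring
end

section
/- Let g : ℕ → (0,∞) be a positive sequence satisfying 2g_n - g_{n-1} - g_{n+1} ≥ 0 for all n ≥ 2 and 2g_1 - g_2 ≥ 0. Then for every finitely supported u : ℕ → ℂ with u_0 = 0, ∑_{n≥1} w_n |u_n|² ≤ ∑_{n≥1} |u_n - u_{n-1}|², where w_n = (2g_n - g_{n-1} - g_{n+1})/g_n for n ≥ 2 and w_1 = (2g_1 - g_2)/g_1. -/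
/-!
Ground-state representation: for a positive sequence `g`, each difference dominates
`(1 - gₙ/gₙ₊₁)|uₙ₊₁|² + (1 - gₙ₊₁/gₙ)|uₙ|²` (AM-GM on the cross term `2|uₙ||uₙ₊₁|`).
Summing over `n` and shifting the index of the second half, which is allowed because `u`
vanishes at both ends, produces exactly `∑ wₙ |uₙ|²` with
`wₙ = (2gₙ - gₙ₋₁ - gₙ₊₁)/gₙ`, where `g₀ = 0` encodes the Dirichlet condition.
-/

open Finset

noncomputable def hardyWeight (g : ℕ → ℝ) (n : ℕ) : ℝ :=
  (2 * g n - g (n - 1) - g (n + 1)) / g n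

lemma hardyWeight_eq {g : ℕ → ℝ} {n : ℕ} (hn : g n ≠ 0) :
    hardyWeight g n = (1 - g (n - 1) / g n) + (1 - g (n + 1) / g n) := by
  unfold hardyWeight
  field_simp
  ring

section

variable {E : Type*} [SeminormedAddCommGroup E]

lemma weighted_norm_sq_add_le_norm_sub_sq {x y : ℝ} (hx : 0 < x) (hy : 0 < y) (a b : E) :
    (1 - x / y) * ‖a‖ ^ 2 + (1 - y / x) * ‖b‖ ^ 2 ≤ ‖a - b‖ ^ 2 := by
  have h_rev : (‖a‖ - ‖b‖) ^ 2 ≤ ‖a - b‖ ^ 2 :=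
    sq_le_sq' (abs_le.mp (abs_norm_sub_norm_le a b)).1 (abs_le.mp (abs_norm_sub_norm_le a b)).2
  have h_amgm : 2 * ‖a‖ * ‖b‖ ≤ x / y * ‖a‖ ^ 2 + y / x * ‖b‖ ^ 2 := by
    rw [div_mul_eq_mul_div, div_mul_eq_mul_div, div_add_div _ _ hy.ne' hx.ne',
      le_div_iff₀ (by positivity)]
    nlinarith [sq_nonneg (x * ‖a‖ - y * ‖b‖)]
  nlinarith

theorem sum_hardyWeight_mul_norm_sq_le {g : ℕ → ℝ} (hg0 : 0 ≤ g 0) (hg : ∀ n, 1 ≤ n → 0 < g n)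
    {u : ℕ → E} (hu0 : u 0 = 0) {N : ℕ} (huN : u N = 0) :
    ∑ n ∈ range N, hardyWeight g (n + 1) * ‖u (n + 1)‖ ^ 2 ≤
      ∑ n ∈ range N, ‖u (n + 1) - u n‖ ^ 2 := by
  set A : ℕ → ℝ := fun m => (1 - g (m - 1) / g m) * ‖u m‖ ^ 2
  set B : ℕ → ℝ := fun m => (1 - g (m + 1) / g m) * ‖u m‖ ^ 2
  have h_split : ∀ n, hardyWeight g (n + 1) * ‖u (n + 1)‖ ^ 2 = A (n + 1) + B (n + 1) := by
    intro n
    rw [hardyWeight_eq (hg _ n.succ_pos).ne']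
    ring
  have h_shift : ∑ n ∈ range N, B (n + 1) = ∑ n ∈ range N, B n := by
    have h_succ' := sum_range_succ' B N
    rw [sum_range_succ] at h_succ'
    simpa [B, hu0, huN] using h_succ'.symm
  have h_term : ∀ n, A (n + 1) + B n ≤ ‖u (n + 1) - u n‖ ^ 2 := by
    rintro (_ | n)
    · have : 0 ≤ g 0 / g 1 := div_nonneg hg0 (hg 1 le_rfl).le
      simp only [A, B, hu0, norm_zero, sub_zero]
      nlinarith [sq_nonneg ‖u 1‖]
    · exact weighted_norm_sq_add_le_norm_sub_sq (hg _ n.succ_pos) (hg _ (by omega)) _ _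
  calc ∑ n ∈ range N, hardyWeight g (n + 1) * ‖u (n + 1)‖ ^ 2
      = ∑ n ∈ range N, A (n + 1) + ∑ n ∈ range N, B n := by
        rw [← h_shift, ← sum_add_distrib]
        exact sum_congr rfl fun n _ => h_split n
    _ = ∑ n ∈ range N, (A (n + 1) + B n) := sum_add_distrib.symm
    _ ≤ ∑ n ∈ range N, ‖u (n + 1) - u n‖ ^ 2 := sum_le_sum fun n _ => h_term n

end

theorem generalized_discrete_hardy_inequality_general
    (g : ℕ → ℝ) (hg : ∀ n, 1 ≤ n → 0 < g n)
    (w : ℕ → ℝ) (hw1 : w 1 = (2 * g 1 - g 2) / g 1)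
    (hw : ∀ n, 2 ≤ n → w n = (2 * g n - g (n - 1) - g (n + 1)) / g n)
    (u : ℕ → ℂ) (hu : ∃ N, ∀ n, N ≤ n → u n = 0) (hu0 : u 0 = 0) :
    ∑' n : ℕ, w (n + 1) * ‖u (n + 1)‖ ^ 2 ≤ ∑' n : ℕ, ‖u (n + 1) - u n‖ ^ 2 := by
  obtain ⟨N, hN⟩ := hu
  set G := Function.update g 0 0
  have hG : ∀ n, 1 ≤ n → G n = g n := fun n hn => Function.update_of_ne (by omega) _ _
  have hwG : ∀ n, w (n + 1) = hardyWeight G (n + 1) := by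
    rintro (_ | n)
    · simp [hardyWeight, G, hw1]
    · rw [hw _ (by omega), hardyWeight, hG _ (by omega), hG _ (by omega), hG _ (by omega)]
  rw [tsum_eq_sum (s := range N) fun n hn => by simp [hN (n + 1) (by simp at hn; omega)],
    tsum_eq_sum (s := range N) fun n hn => by
      simp [hN (n + 1) (by simp at hn; omega), hN n (by simpa using hn)]]
  simp_rw [hwG]
  exact sum_hardyWeight_mul_norm_sq_le (by simp [G]) (fun n hn => hG n hn ▸ hg n hn) hu0
    (hN N le_rfl)

theorem generalized_discrete_hardy_inequality
    (g : ℕ → ℝ) (hg : ∀ n, 1 ≤ n → 0 < g n)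
    (hsup : ∀ n, 2 ≤ n → 0 ≤ 2 * g n - g (n - 1) - g (n + 1))
    (hsup1 : 0 ≤ 2 * g 1 - g 2)
    (w : ℕ → ℝ) (hw1 : w 1 = (2 * g 1 - g 2) / g 1)
    (hw : ∀ n, 2 ≤ n → w n = (2 * g n - g (n - 1) - g (n + 1)) / g n)
    (u : ℕ → ℂ) (hu : ∃ N, ∀ n, N ≤ n → u n = 0) (hu0 : u 0 = 0) :
    ∑' n : ℕ, w (n + 1) * ‖u (n + 1)‖ ^ 2 ≤ ∑' n : ℕ, ‖u (n + 1) - u n‖ ^ 2 :=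
  generalized_discrete_hardy_inequality_general g hg w hw1 hw u hu hu0
end

section
/- For every q ∈ (0, 1/2] and every finitely supported u : ℕ → ℂ with u_0 = 0, one has ∑_{n≥1} (2 - (1 - 1/n)^q - (1 + 1/n)^q) |u_n|² ≤ ∑_{n≥1} |u_n - u_{n-1}|². -/
/-!
Ground state representation with `g n = n ^ q`. Writing `u n = g n • v n`, the identity
`‖a • w - b • v‖² = a (a - b) ‖w‖² + b (b - a) ‖v‖² + a b ‖w - v‖²` splits each difference term
`‖u n - u (n-1)‖²` into the weighted term `(2 - g (n-1) / g n - g (n+1) / g n) ‖u n‖²`, a nonnegative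
term, and the increment of `g n (g (n+1) - g n) ‖v n‖²`, which telescopes to zero over the support.
-/

open Finset

section GroundState

variable {E : Type*} [NormedAddCommGroup E] [InnerProductSpace ℝ E]

lemma norm_smul_sub_smul_sq (a b : ℝ) (w v : E) :
    ‖a • w - b • v‖ ^ 2
      = a * (a - b) * ‖w‖ ^ 2 + b * (b - a) * ‖v‖ ^ 2 + a * b * ‖w - v‖ ^ 2 := by
  rw [norm_sub_sq_real, norm_sub_sq_real, norm_smul, norm_smul, real_inner_smul_left,
    real_inner_smul_right, Real.norm_eq_abs, Real.norm_eq_abs, mul_pow, mul_pow, sq_abs, sq_abs]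
  ring

lemma le_norm_smul_sub_smul_sq {a b : ℝ} (hab : 0 ≤ a * b) (w v : E) :
    a * (a - b) * ‖w‖ ^ 2 + b * (b - a) * ‖v‖ ^ 2 ≤ ‖a • w - b • v‖ ^ 2 := by
  rw [norm_smul_sub_smul_sq]
  nlinarith [mul_nonneg hab (sq_nonneg ‖w - v‖)]

lemma ground_state_step {g₀ g₁ : ℝ} (h₀ : 0 ≤ g₀) (h₁ : 0 < g₁) (g₂ : ℝ) (v w : E) :
    (2 - g₀ / g₁ - g₂ / g₁) * ‖g₁ • w‖ ^ 2
        + (g₁ * (g₂ - g₁) * ‖w‖ ^ 2 - g₀ * (g₁ - g₀) * ‖v‖ ^ 2)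
      ≤ ‖g₁ • w - g₀ • v‖ ^ 2 := by
  have hexpand : (2 - g₀ / g₁ - g₂ / g₁) * ‖g₁ • w‖ ^ 2
        + (g₁ * (g₂ - g₁) * ‖w‖ ^ 2 - g₀ * (g₁ - g₀) * ‖v‖ ^ 2)
      = g₁ * (g₁ - g₀) * ‖w‖ ^ 2 + g₀ * (g₀ - g₁) * ‖v‖ ^ 2 := by
    rw [norm_smul, Real.norm_of_nonneg h₁.le]
    field_simp
    ring
  rw [hexpand]
  exact le_norm_smul_sub_smul_sq (mul_nonneg h₁.le h₀) w v

theorem hardy_inequality_of_pos (g : ℕ → ℝ) (hg₀ : 0 ≤ g 0) (hg : ∀ n, 0 < g (n + 1))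
    (u : ℕ → E) (hu : ∃ N, ∀ n, N ≤ n → u n = 0) (hu₀ : u 0 = 0) :
    ∑' n : ℕ, (2 - g n / g (n + 1) - g (n + 2) / g (n + 1)) * ‖u (n + 1)‖ ^ 2
      ≤ ∑' n : ℕ, ‖u (n + 1) - u n‖ ^ 2 := by
  obtain ⟨N, hN⟩ := hu
  set v : ℕ → E := fun n => (g n)⁻¹ • u n
  have hv₀ : v 0 = 0 := by simp [v, hu₀]
  have hvu : ∀ n, u n = g n • v n
    | 0 => by rw [hu₀, hv₀, smul_zero]
    | n + 1 => by simp [v, smul_smul, (hg n).ne']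
  have hg_nonneg : ∀ n, 0 ≤ g n
    | 0 => hg₀
    | n + 1 => (hg n).le
  set D : ℕ → ℝ := fun n => g n * (g (n + 1) - g n) * ‖v n‖ ^ 2
  have hstep : ∀ n, (2 - g n / g (n + 1) - g (n + 2) / g (n + 1)) * ‖u (n + 1)‖ ^ 2
      + (D (n + 1) - D n) ≤ ‖u (n + 1) - u n‖ ^ 2 := fun n => by
    rw [hvu (n + 1), hvu n]
    exact ground_state_step (hg_nonneg n) (hg n) _ _ _
  have hD₀ : D 0 = 0 := by simp [D, hv₀]
  have hDN : D N = 0 := by simp [D, v, hN N le_rfl]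
  have hout : ∀ n ∉ range N, u n = 0 ∧ u (n + 1) = 0 := fun n hn => by
    rw [mem_range, not_lt] at hn
    exact ⟨hN n hn, hN (n + 1) (by omega)⟩
  rw [tsum_eq_sum (s := range N) fun n hn => by simp [(hout n hn).2],
    tsum_eq_sum (s := range N) fun n hn => by simp [hout n hn]]
  have hsum := sum_le_sum fun n (_ : n ∈ range N) => hstep n
  rw [sum_add_distrib, sum_range_sub D N, hDN, hD₀, sub_zero, add_zero] at hsum
  exact hsum

end GroundState

lemma one_sub_inv_succ_rpow (n : ℕ) (q : ℝ) :
    (1 - 1 / ((n : ℝ) + 1)) ^ q = (n : ℝ) ^ q / ((n + 1 : ℕ) : ℝ) ^ q := by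
  rw [← Real.div_rpow n.cast_nonneg n.succ.cast_nonneg]
  congr 1
  field_simp
  push_cast
  ring

lemma one_add_inv_succ_rpow (n : ℕ) (q : ℝ) :
    (1 + 1 / ((n : ℝ) + 1)) ^ q = ((n + 2 : ℕ) : ℝ) ^ q / ((n + 1 : ℕ) : ℝ) ^ q := by
  rw [← Real.div_rpow (n + 2).cast_nonneg n.succ.cast_nonneg]
  congr 1
  field_simp
  push_cast
  ring

theorem optimal_hardy_inequality_q_general (q : ℝ)
    (u : ℕ → ℂ) (hu : ∃ N, ∀ n, N ≤ n → u n = 0) (hu0 : u 0 = 0) :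
    ∑' n : ℕ, (2 - (1 - 1 / ((n : ℝ) + 1)) ^ q - (1 + 1 / ((n : ℝ) + 1)) ^ q) * ‖u (n + 1)‖ ^ 2
      ≤ ∑' n : ℕ, ‖u (n + 1) - u n‖ ^ 2 := by
  simp only [one_sub_inv_succ_rpow, one_add_inv_succ_rpow]
  exact hardy_inequality_of_pos (fun n => (n : ℝ) ^ q) (Real.rpow_nonneg (Nat.cast_nonneg 0) q)
    (fun n => Real.rpow_pos_of_pos (Nat.cast_pos.mpr n.succ_pos) q) u hu hu0

theorem optimal_hardy_inequality_q (q : ℝ) (hq0 : 0 < q) (hq : q ≤ 1 / 2)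
    (u : ℕ → ℂ) (hu : ∃ N, ∀ n, N ≤ n → u n = 0) (hu0 : u 0 = 0) :
    ∑' n : ℕ, (2 - (1 - 1 / ((n : ℝ) + 1)) ^ q - (1 + 1 / ((n : ℝ) + 1)) ^ q) * ‖u (n + 1)‖ ^ 2
      ≤ ∑' n : ℕ, ‖u (n + 1) - u n‖ ^ 2 :=
  optimal_hardy_inequality_q_general q u hu hu0
end

section
/- For every integer n ≥ 1, the optimal discrete Hardy weight satisfies 2 - √(1 - 1/n) - √(1 + 1/n) > 1/(4n²). -/
/-! Write `x = 1/n`. Squaring, `(√(1 - x) + √(1 + x))² = 2 + 2√(1 - x²) ≤ 4 - x²`, because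
`√(1 - y) ≤ 1 - y/2`; and `4 - x²` falls short of `(2 - x²/4)²` by exactly `x⁴/16 > 0`. -/

open Real

lemma sqrt_one_sub_le_one_sub_half {y : ℝ} (hy : y ≤ 2) : √(1 - y) ≤ 1 - y / 2 :=
  (sqrt_le_left (by linarith)).2 (by nlinarith [sq_nonneg y])

lemma sq_sqrt_one_sub_add_sqrt_one_add {x : ℝ} (hx : |x| ≤ 1) :
    (√(1 - x) + √(1 + x)) ^ 2 = 2 + 2 * √(1 - x ^ 2) := by
  obtain ⟨hx₁, hx₂⟩ := abs_le.1 hx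
  have hprod : √(1 - x) * √(1 + x) = √(1 - x ^ 2) := by
    rw [← sqrt_mul (by linarith)]
    ring_nf
  rw [add_sq, sq_sqrt (by linarith), sq_sqrt (by linarith), mul_assoc, hprod]
  ring

theorem sqrt_one_sub_add_sqrt_one_add_lt {x : ℝ} (hx : |x| ≤ 1) (hx₀ : x ≠ 0) :
    √(1 - x) + √(1 + x) < 2 - x ^ 2 / 4 := by
  have hx₂ : x ^ 2 ≤ 1 := (sq_le_one_iff_abs_le_one x).2 hx
  have hx₄ : 0 < x ^ 4 := by positivity
  refine lt_of_pow_lt_pow_left₀ 2 (by linarith) ?_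
  calc (√(1 - x) + √(1 + x)) ^ 2 = 2 + 2 * √(1 - x ^ 2) := sq_sqrt_one_sub_add_sqrt_one_add hx
    _ ≤ 4 - x ^ 2 := by linarith [sqrt_one_sub_le_one_sub_half (y := x ^ 2) (by linarith)]
    _ < (2 - x ^ 2 / 4) ^ 2 := by nlinarith

theorem optimal_hardy_weight_gt (n : ℕ) (hn : 1 ≤ n) :
    1 / (4 * (n : ℝ) ^ 2) < 2 - Real.sqrt (1 - 1 / (n : ℝ)) - Real.sqrt (1 + 1 / (n : ℝ)) := by
  have hn' : (1 : ℝ) ≤ n := by exact_mod_cast hn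
  have hx : |1 / (n : ℝ)| ≤ 1 := by
    rw [abs_of_pos (by positivity)]
    exact (div_le_one₀ (by positivity)).2 hn'
  have hlt := sqrt_one_sub_add_sqrt_one_add_lt hx (by positivity)
  have hweight : (1 / (n : ℝ)) ^ 2 / 4 = 1 / (4 * (n : ℝ) ^ 2) := by field_simp
  linarith
end

section
/- Let a ∈ ℂ with |a| ≤ 1 and let J_a be the operator on ℓ²(ℕ) given by (J_a ψ)_1 = aψ_1 + ψ_2 and (J_a ψ)_n = ψ_{n-1} + ψ_{n+1} for n ≥ 2. Then J_a has no eigenvalues: if J_a ψ = z ψ for some z ∈ ℂ and ψ ∈ ℓ²(ℕ), then ψ = 0. -/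
/-!
The recurrence has characteristic polynomial `X² - zX + 1`, whose roots are `r` and `r⁻¹` with `‖r‖ ≤ 1`.
The sequence `ψ (n + 2) - r ψ (n + 1)` is geometric with ratio `r⁻¹`; as it tends to `0`, it vanishes,
so `ψ (n + 1) = r ^ n ψ 1`. The boundary condition then gives `ψ 1 = 0` unless `a = r⁻¹`, and in that case
`a ψ (n + 2) = ψ (n + 1)` with `‖a‖ ≤ 1`, so `‖ψ (n + 1)‖` is nondecreasing while tending to `0`.
-/

open Filter Topology Polynomial

theorem Memℓp.tendsto_cofinite_zero {ι : Type*} {E : ι → Type*} [∀ i, NormedAddCommGroup (E i)]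
    {p : ENNReal} {f : ∀ i, E i} (hf : Memℓp f p) (hp : 0 < p.toReal) :
    Tendsto (fun i => ‖f i‖) cofinite (𝓝 0) := by
  have h := ((hf.summable hp).tendsto_cofinite_zero).rpow_const (p := p.toReal⁻¹) (.inr (by positivity))
  rw [Real.zero_rpow (inv_ne_zero hp.ne')] at h
  exact h.congr fun i => Real.rpow_rpow_inv (norm_nonneg _) hp.ne'

theorem eq_zero_of_mul_succ_eq_of_tendsto_zero {R : Type*} [NonUnitalNormedRing R] {r : R}
    {u : ℕ → R} (hr : ‖r‖ ≤ 1) (hu : ∀ n, r * u (n + 1) = u n)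
    (hlim : Tendsto u atTop (𝓝 0)) (n : ℕ) : u n = 0 := by
  have hmono : Monotone fun n => ‖u n‖ := monotone_nat_of_le_succ fun n =>
    calc ‖u n‖ = ‖r * u (n + 1)‖ := by rw [hu]
      _ ≤ ‖r‖ * ‖u (n + 1)‖ := norm_mul_le _ _
      _ ≤ ‖u (n + 1)‖ := mul_le_of_le_one_left (norm_nonneg _) hr
  exact norm_le_zero_iff.mp <| hmono.ge_of_tendsto (by simpa using hlim.norm) n

theorem exists_norm_le_one_mul_sub_eq_one {𝕜 : Type*} [NormedField 𝕜] [IsAlgClosed 𝕜] (z : 𝕜) :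
    ∃ r : 𝕜, ‖r‖ ≤ 1 ∧ r * (z - r) = 1 := by
  obtain ⟨r, hr⟩ := IsAlgClosed.exists_root (C 1 * X ^ 2 + C (-z) * X + C 1)
    (by rw [degree_quadratic one_ne_zero]; decide)
  have hprod : r * (z - r) = 1 := by
    simp only [IsRoot, eval_add, eval_mul, eval_C, eval_pow, eval_X] at hr
    linear_combination -hr
  by_cases hle : ‖r‖ ≤ 1
  · exact ⟨r, hle, hprod⟩
  · refine ⟨z - r, ?_, by linear_combination hprod⟩
    have : ‖r‖ * ‖z - r‖ = 1 := by rw [← norm_mul, hprod, norm_one]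
    nlinarith [norm_nonneg (z - r)]

theorem Ja_no_eigenvalues (a : ℂ) (ha : ‖a‖ ≤ 1)
    (z : ℂ) (ψ : ℕ → ℂ) (hℓ2 : Memℓp (fun n : ℕ => ψ (n + 1)) 2)
    (h1 : a * ψ 1 + ψ 2 = z * ψ 1)
    (hrec : ∀ n, 2 ≤ n → ψ (n - 1) + ψ (n + 1) = z * ψ n) :
    ∀ n, 1 ≤ n → ψ n = 0 := by
  suffices ∀ n, ψ (n + 1) = 0 from fun n hn => Nat.sub_add_cancel hn ▸ this (n - 1)
  obtain ⟨r, hr, hrz⟩ := exists_norm_le_one_mul_sub_eq_one z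
  have hlim : Tendsto (fun n => ψ (n + 1)) atTop (𝓝 0) := tendsto_zero_iff_norm_tendsto_zero.mpr <|
    Nat.cofinite_eq_atTop ▸ hℓ2.tendsto_cofinite_zero (by norm_num)
  have hstep : ∀ n, ψ (n + 2) = r * ψ (n + 1) := by
    refine fun n => sub_eq_zero.mp <| eq_zero_of_mul_succ_eq_of_tendsto_zero hr (fun n => ?_)
      (by simpa using (hlim.comp (tendsto_add_atTop_nat 1)).sub (hlim.const_mul r)) n
    have := hrec (n + 2) (by omega)
    rw [show n + 2 - 1 = n + 1 by omega] at this
    linear_combination r * this + ψ (n + 2) * hrz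
  have hbdry : (a - (z - r)) * ψ 1 = 0 := by linear_combination h1 - hstep 0
  rcases mul_eq_zero.mp hbdry with haz | hψ1
  · -- here `a * r = 1`, so `a ψ (n + 2) = ψ (n + 1)`
    refine eq_zero_of_mul_succ_eq_of_tendsto_zero ha (fun n => ?_) hlim
    linear_combination a * hstep n + ψ (n + 1) * hrz + ψ (n + 1) * r * haz
  · intro n
    induction n with
    | zero => exact hψ1
    | succ n ih => rw [hstep, ih, mul_zero]
end

section
/- There is no nontrivial Hardy inequality for the discrete Neumann Laplacian: if w : ℕ → [0,∞) is such that ∑_{n≥1} w_n |u_n|² ≤ ∑_{n≥1} |u_{n+1} - u_n|² for all finitely supported u : ℕ → ℂ, then w_n = 0 for all n. -/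
/-!
Test the inequality on the plateau `u = plateau n M`, equal to `1` up to `n` and decreasing
linearly to `0` on `[n, n + M]`. The left side is at least `w n`, while the right side is the
energy `M · (1/M)² = 1/M` of the ramp. Letting `M → ∞` gives `w n ≤ 0`.
-/

open Finset Filter

noncomputable def plateau (n M j : ℕ) : ℂ := (min M (n + M - j) : ℕ) / M

section
variable {n M j : ℕ}

lemma plateau_eq_zero (h : n + M ≤ j) : plateau n M j = 0 := by
  simp [plateau, Nat.sub_eq_zero_of_le h]

lemma plateau_of_le (hM : M ≠ 0) (h : j ≤ n) : plateau n M j = 1 := by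
  rw [plateau, min_eq_left (by omega), div_self (Nat.cast_ne_zero.2 hM)]

lemma plateau_succ_succ : plateau (n + 1) M (j + 1) = plateau n M j := by
  simp only [plateau, Nat.add_right_comm n 1 M, Nat.add_sub_add_right]

lemma plateau_succ_sub_of_lt (h : j < n) : plateau n M (j + 1) - plateau n M j = 0 := by
  rw [plateau, plateau, min_eq_left (by omega), min_eq_left (by omega), sub_self]

lemma plateau_succ_sub_of_mem_Ico (h : j ∈ Ico n (n + M)) :
    plateau n M (j + 1) - plateau n M j = -1 / M := by
  rw [mem_Ico] at h
  have hstep : min M (n + M - (j + 1)) + 1 = min M (n + M - j) := by omega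
  simp only [plateau, ← hstep, Nat.cast_add, Nat.cast_one]
  ring

lemma tsum_norm_plateau_succ_sub_sq (hM : M ≠ 0) :
    ∑' j, ‖plateau n M (j + 1) - plateau n M j‖ ^ 2 = 1 / M := by
  have hvanish : ∀ j ∉ range (n + M), ‖plateau n M (j + 1) - plateau n M j‖ ^ 2 = 0 := by
    intro j hj
    rw [mem_range, not_lt] at hj
    simp [plateau_eq_zero hj, plateau_eq_zero (hj.trans j.le_succ)]
  rw [tsum_eq_sum hvanish, ← sum_range_add_sum_Ico _ (Nat.le_add_right n M),
    sum_eq_zero fun j hj => by rw [plateau_succ_sub_of_lt (mem_range.1 hj)]; simp,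
    sum_congr rfl fun j hj => by rw [plateau_succ_sub_of_mem_Ico hj], sum_const, Nat.card_Ico,
    Nat.add_sub_cancel_left]
  simp only [Complex.norm_div, norm_neg, norm_one, RCLike.norm_natCast, one_div, inv_pow,
    nsmul_eq_mul, zero_add]
  field_simp

end

theorem no_hardy_for_neumann (w : ℕ → ℝ) (hw : ∀ n, 0 ≤ w n)
    (h : ∀ u : ℕ → ℂ, (∃ N, ∀ n, N ≤ n → u n = 0) →
      ∑' n : ℕ, w (n + 1) * ‖u (n + 1)‖ ^ 2 ≤ ∑' n : ℕ, ‖u (n + 2) - u (n + 1)‖ ^ 2) :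
    ∀ n, 1 ≤ n → w n = 0 := by
  intro n hn
  obtain ⟨m, rfl⟩ := Nat.exists_eq_add_of_le' hn
  have hbound : ∀ M : ℕ, M ≠ 0 → w (m + 1) ≤ 1 / M := by
    intro M hM
    set u := plateau (m + 1) M
    have hsum : Summable fun k => w (k + 1) * ‖u (k + 1)‖ ^ 2 :=
      summable_of_ne_finset_zero (s := range (m + M)) fun k hk => by
        rw [mem_range, not_lt] at hk
        simp [u, plateau_eq_zero (by omega : m + 1 + M ≤ k + 1)]
    calc w (m + 1) = w (m + 1) * ‖u (m + 1)‖ ^ 2 := by simp [u, plateau_of_le hM le_rfl]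
      _ ≤ ∑' k, w (k + 1) * ‖u (k + 1)‖ ^ 2 :=
        hsum.le_tsum m fun k _ => mul_nonneg (hw _) (sq_nonneg _)
      _ ≤ ∑' k, ‖u (k + 2) - u (k + 1)‖ ^ 2 := h u ⟨m + 1 + M, fun _ => plateau_eq_zero⟩
      _ = 1 / M := by simp only [u, plateau_succ_succ]; exact tsum_norm_plateau_succ_sub_sq hM
  exact le_antisymm (ge_of_tendsto tendsto_one_div_atTop_nhds_zero_nat
    (eventually_atTop.2 ⟨1, fun M hM => hbound M (by omega)⟩)) (hw _)
end
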